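/- arXiv:2601.02855 — 4 statements merged into one kernel-verified Lean document; each statement's English description precedes it below -/
import Mathlib

section
/- For every product prior p with classwise lower bound α, every record index i ∈ Fin n, every class r ∈ Fin k, and every output y ∈ ℝ^m, the conditional output density satisfies f_{Y|D_i=r}(y) ≤ B_cor(α) · f_Y(y), where B_cor(α) := max_{j1, j2 ∈ Fin k} (α ∑_j exp(−Δ_{j,j1}) + (1 − kα) exp(−Δ_{j1,j2}))^{-1} and Δ_{j,j'} := (∑_l |w_{l,j} − w_{l,j'}|)/b. -/
open Finset Real

noncomputable section

/-- Scaled ℓ1 column distance `Δ_{j,j'} := (∑_l |w_{l,j} − w_{l,j'}|)/b`. -/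
def Δcol {m k : ℕ} (W : Fin m → Fin k → ℝ) (b : ℝ) (j j' : Fin k) : ℝ :=
  (∑ l, |W l j - W l j'|) / b

/-- The exponentiated simplified bound of the corollary:
`B_cor(α) = max_{j1,j2} (α ∑_j exp(−Δ_{j,j1}) + (1 − kα) exp(−Δ_{j1,j2}))⁻¹`. -/
def Bcor {m k : ℕ} (W : Fin m → Fin k → ℝ) (b α : ℝ) : ℝ :=
  ⨆ j1 : Fin k, ⨆ j2 : Fin k,
    (α * (∑ j, Real.exp (-Δcol W b j j1)) + (1 - (k : ℝ) * α) * Real.exp (-Δcol W b j1 j2))⁻¹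

/-- Linear-query answer `q(x)_l := ∑_i w_{l, x i}`. -/
def linQuery {n m k : ℕ} (W : Fin m → Fin k → ℝ) (x : Fin n → Fin k) (l : Fin m) : ℝ :=
  ∑ i, W l (x i)

/-- Laplace-mechanism output density given database `x`. -/
def lapDensity {n m k : ℕ} (W : Fin m → Fin k → ℝ) (b : ℝ) (x : Fin n → Fin k)
    (y : Fin m → ℝ) : ℝ :=
  ∏ l, (1 / (2 * b)) * Real.exp (-|y l - linQuery W x l| / b)

/-- Output marginal density `f_Y(y) = ∑_x P(x) g(x,y)` for product prior `p`. -/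
def fY {n m k : ℕ} (W : Fin m → Fin k → ℝ) (b : ℝ) (p : Fin n → Fin k → ℝ)
    (y : Fin m → ℝ) : ℝ :=
  ∑ x : Fin n → Fin k, (∏ i, p i (x i)) * lapDensity W b x y

/-- Conditional output density given that record `i` equals class `r`. -/
def fCond {n m k : ℕ} (W : Fin m → Fin k → ℝ) (b : ℝ) (p : Fin n → Fin k → ℝ)
    (i : Fin n) (r : Fin k) (y : Fin m → ℝ) : ℝ :=
  ∑ x ∈ Finset.univ.filter (fun x : Fin n → Fin k => x i = r),
    (∏ i' ∈ Finset.univ.erase i, p i' (x i')) * lapDensity W b x y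

lemma lapDensity_nonneg {n m k : ℕ} (W : Fin m → Fin k → ℝ) {b : ℝ} (hb : 0 < b)
    (x : Fin n → Fin k) (y : Fin m → ℝ) : 0 ≤ lapDensity W b x y := by
  apply Finset.prod_nonneg
  intro l _
  positivity

lemma Δcol_symm {m k : ℕ} (W : Fin m → Fin k → ℝ) (b : ℝ) (j j' : Fin k) :
    Δcol W b j j' = Δcol W b j' j := by
  unfold Δcol
  congr 1
  exact Finset.sum_congr rfl (fun l _ => abs_sub_comm _ _)

lemma lapDensity_update_ge {n m k : ℕ} (W : Fin m → Fin k → ℝ) {b : ℝ} (hb : 0 < b)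
    (x : Fin n → Fin k) (y : Fin m → ℝ) (i : Fin n) (j r : Fin k) (hx : x i = r) :
    Real.exp (-Δcol W b j r) * lapDensity W b x y
      ≤ lapDensity W b (Function.update x i j) y := by
  have hq : ∀ l, linQuery W (Function.update x i j) l = linQuery W x l + (W l j - W l r) := by
    intro l
    unfold linQuery
    have h : ∑ i', (W l (Function.update x i j i') - W l (x i')) = W l j - W l r := by
      rw [Finset.sum_eq_single i]
      · simp [hx]
      · intro i' _ h; simp [Function.update_of_ne h]
      · simp
    rw [Finset.sum_sub_distrib] at h
    linarith
  have key : Real.exp (-Δcol W b j r) * lapDensity W b x y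
      = ∏ l, (Real.exp (-(|W l j - W l r| / b)) * ((1 / (2 * b)) * Real.exp (-|y l - linQuery W x l| / b))) := by
    rw [Finset.prod_mul_distrib, ← Real.exp_sum]
    unfold lapDensity Δcol
    congr 2
    simp [Finset.sum_div]
  rw [key]
  unfold lapDensity
  apply Finset.prod_le_prod
  · intro l _; positivity
  · intro l _
    rw [mul_comm, mul_assoc]
    apply mul_le_mul_of_nonneg_left _ (by positivity)
    rw [← Real.exp_add]
    apply Real.exp_le_exp.mpr
    rw [hq]
    have h1 : |y l - (linQuery W x l + (W l j - W l r))| ≤ |y l - linQuery W x l| + |W l j - W l r| := by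
      calc |y l - (linQuery W x l + (W l j - W l r))|
          = |(y l - linQuery W x l) - (W l j - W l r)| := by ring_nf
        _ ≤ |y l - linQuery W x l| + |W l j - W l r| := abs_sub _ _
    have h2 := (div_le_div_iff_of_pos_right hb).mpr h1
    have h3 : (|y l - linQuery W x l| + |W l j - W l r|) / b
        = |y l - linQuery W x l| / b + |W l j - W l r| / b := add_div _ _ _
    rw [neg_div, neg_div]
    linarith


/-- Corollary (simplified context-aware bound): for every product prior with classwise
lower bound `α`, record `i`, class `r` and output `y`,
`f_{Y|D_i=r}(y) ≤ B_cor(α) · f_Y(y)`. -/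
theorem laplace_linear_query_simplified_pml_bound
    (k n m : ℕ) (hk : 0 < k) (hn : 0 < n) (hm : 0 < m)
    (b : ℝ) (hb : 0 < b) (W : Fin m → Fin k → ℝ)
    (α : ℝ) (hα : 0 < α) (hαk : α ≤ 1 / (k : ℝ))
    (p : Fin n → Fin k → ℝ)
    (hplb : ∀ i j, α ≤ p i j) (hpsum : ∀ i, ∑ j, p i j = 1)
    (i : Fin n) (r : Fin k) (y : Fin m → ℝ) :
    fCond W b p i r y ≤ Bcor W b α * fY W b p y := by
  set A := Finset.univ.filter (fun x : Fin n → Fin k => x i = r) with hA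
  set D := ∑ j, p i j * Real.exp (-Δcol W b j r) with hD
  have hp0 : ∀ i' j, (0:ℝ) ≤ p i' j := fun i' j => le_trans hα.le (hplb i' j)
  -- reindexing
  have key : ∀ F : (Fin n → Fin k) → ℝ,
      ∑ x : Fin n → Fin k, F x = ∑ j : Fin k, ∑ x ∈ A, F (Function.update x i j) := by
    intro F
    rw [← Finset.sum_product']
    refine Finset.sum_nbij' (fun x => (x i, Function.update x i r))
      (fun jx => Function.update jx.2 i jx.1) ?_ ?_ ?_ ?_ ?_
    · intro x _
      simp [hA, Finset.mem_product]
    · intro jx _; simp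
    · intro x _
      simp [Function.update_idem, Function.update_eq_self]
    · intro jx hjx
      have h2 : jx.2 i = r := by
        have := (Finset.mem_product.mp hjx).2
        simpa [hA] using this
      have : Function.update jx.2 i r = jx.2 := by rw [← h2]; exact Function.update_eq_self _ _
      simp [Function.update_idem, this]
    · intro x _
      simp [Function.update_idem, Function.update_eq_self]
  have hprod : ∀ (j : Fin k) (x : Fin n → Fin k),
      (∏ i', p i' (Function.update x i j i'))
        = p i j * ∏ i' ∈ Finset.univ.erase i, p i' (x i') := by
    intro j x
    rw [← Finset.mul_prod_erase Finset.univ _ (Finset.mem_univ i), Function.update_self]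
    congr 1
    exact Finset.prod_congr rfl (fun i' hi' => by
      rw [Function.update_of_ne (Finset.mem_erase.mp hi').1])
  -- main inequality: D * fCond ≤ fY
  have hDfC : D * fCond W b p i r y ≤ fY W b p y := by
    unfold fY
    rw [key (fun x => (∏ i', p i' (x i')) * lapDensity W b x y)]
    have expand : D * fCond W b p i r y
        = ∑ j : Fin k, ∑ x ∈ A,
            p i j * Real.exp (-Δcol W b j r)
              * ((∏ i' ∈ Finset.univ.erase i, p i' (x i')) * lapDensity W b x y) := by
      rw [hD, Finset.sum_mul]
      exact Finset.sum_congr rfl (fun j _ => by rw [fCond, ← hA, Finset.mul_sum])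
    rw [expand]
    apply Finset.sum_le_sum
    intro j _
    apply Finset.sum_le_sum
    intro x hx
    have hxr : x i = r := (Finset.mem_filter.mp hx).2
    have e2 : (0:ℝ) ≤ ∏ i' ∈ Finset.univ.erase i, p i' (x i') :=
      Finset.prod_nonneg (fun i' _ => hp0 i' _)
    calc p i j * Real.exp (-Δcol W b j r)
            * ((∏ i' ∈ Finset.univ.erase i, p i' (x i')) * lapDensity W b x y)
        = (p i j * ∏ i' ∈ Finset.univ.erase i, p i' (x i'))
            * (Real.exp (-Δcol W b j r) * lapDensity W b x y) := by ring
      _ ≤ (p i j * ∏ i' ∈ Finset.univ.erase i, p i' (x i'))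
            * lapDensity W b (Function.update x i j) y :=
          mul_le_mul_of_nonneg_left (lapDensity_update_ge W hb x y i j r hxr)
            (mul_nonneg (hp0 i j) e2)
      _ = (∏ i', p i' (Function.update x i j i')) * lapDensity W b (Function.update x i j) y := by
          rw [hprod]
  -- lower bound on D
  obtain ⟨j2, -, hj2⟩ := Finset.exists_min_image Finset.univ
    (fun j => Real.exp (-Δcol W b j r)) ⟨⟨0, hk⟩, Finset.mem_univ _⟩
  have hkpos : (0:ℝ) < k := by exact_mod_cast hk
  have hkα : (0:ℝ) ≤ 1 - (k:ℝ) * α := by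
    have := (le_div_iff₀ hkpos).mp hαk
    linarith
  set T := α * (∑ j, Real.exp (-Δcol W b j r)) + (1 - (k:ℝ) * α) * Real.exp (-Δcol W b r j2)
    with hT
  have hTD : T ≤ D := by
    have step : ∀ j : Fin k, α * Real.exp (-Δcol W b j r)
        + (p i j - α) * Real.exp (-Δcol W b j2 r) ≤ p i j * Real.exp (-Δcol W b j r) := by
      intro j
      have h1 : (p i j - α) * Real.exp (-Δcol W b j2 r)
          ≤ (p i j - α) * Real.exp (-Δcol W b j r) :=
        mul_le_mul_of_nonneg_left (hj2 j (Finset.mem_univ j)) (by linarith [hplb i j])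
      nlinarith [Real.exp_pos (-Δcol W b j r)]
    have hsum := Finset.sum_le_sum (fun j (_ : j ∈ Finset.univ) => step j)
    rw [Finset.sum_add_distrib, ← Finset.mul_sum, ← Finset.sum_mul,
      Finset.sum_sub_distrib, hpsum i] at hsum
    simp only [Finset.sum_const, Finset.card_univ, Fintype.card_fin, nsmul_eq_mul] at hsum
    rw [hT, hD, Δcol_symm W b r j2]
    have : (1:ℝ) - (k:ℝ) * α = 1 - (k:ℝ) * α := rfl
    calc α * (∑ j, Real.exp (-Δcol W b j r)) + (1 - (k:ℝ) * α) * Real.exp (-Δcol W b j2 r)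
        ≤ ∑ j, p i j * Real.exp (-Δcol W b j r) := by linarith
      _ = _ := rfl
  have hsumexp : 0 < ∑ j, Real.exp (-Δcol W b j r) :=
    Finset.sum_pos (fun j _ => Real.exp_pos _) ⟨⟨0, hk⟩, Finset.mem_univ _⟩
  have hTpos : 0 < T := by
    rw [hT]
    have := mul_nonneg hkα (Real.exp_pos (-Δcol W b r j2)).le
    nlinarith
  have hDpos : 0 < D := lt_of_lt_of_le hTpos hTD
  -- D⁻¹ ≤ Bcor
  have hinv : D⁻¹ ≤ Bcor W b α := by
    have h1 : D⁻¹ ≤ T⁻¹ := inv_anti₀ hTpos hTD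
    refine h1.trans ?_
    set f : Fin k → ℝ := fun j2' =>
        (α * (∑ j, Real.exp (-Δcol W b j r)) + (1 - (k:ℝ) * α) * Real.exp (-Δcol W b r j2'))⁻¹
      with hf
    have h2 : T⁻¹ ≤ ⨆ j2' : Fin k, f j2' := by
      rw [hT]
      exact le_ciSup (Set.Finite.bddAbove (Set.finite_range f)) j2
    refine h2.trans ?_
    have h3 : (⨆ j2' : Fin k, f j2') ≤ Bcor W b α := by
      rw [Bcor]
      exact le_ciSup (f := fun j1 : Fin k => ⨆ j2' : Fin k,
        (α * (∑ j, Real.exp (-Δcol W b j j1))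
          + (1 - (k:ℝ) * α) * Real.exp (-Δcol W b j1 j2'))⁻¹)
        (Set.Finite.bddAbove (Set.finite_range _)) r
    exact h3
  -- assemble
  have hfY : 0 ≤ fY W b p y :=
    Finset.sum_nonneg (fun x _ => mul_nonneg
      (Finset.prod_nonneg (fun i' _ => hp0 i' _)) (lapDensity_nonneg W hb x y))
  calc fCond W b p i r y = D⁻¹ * (D * fCond W b p i r y) := by
        field_simp
      _ ≤ D⁻¹ * fY W b p y := mul_le_mul_of_nonneg_left hDfC (inv_nonneg.mpr hDpos.le)
      _ ≤ Bcor W b α * fY W b p y := mul_le_mul_of_nonneg_right hinv hfY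


end
end

section
/- For every product prior p with classwise lower bound α, every record index i ∈ Fin n, every class r ∈ Fin k, and every output y ∈ ℝ^m, the conditional output density satisfies f_{Y|D_i=r}(y) · (∑_j p i j · exp(−Δ_{j,r})) ≤ f_Y(y), where Δ_{j,j'} := (∑_l |w_{l,j} − w_{l,j'}|)/b; i.e., the density ratio f_{Y|D_i=r}(y)/f_Y(y) is at most (∑_j p i j exp(−‖w_{:,j} − w_{:,r}‖_1/b))^{-1}. -/
/-!
Split `f_Y` according to the class of record `i`: `f_Y = ∑_j p_{i,j} f_{Y|D_i=j}`. Changing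
record `i` from class `r` to class `j` moves each query answer `q(x)_l` by `w_{l,j} − w_{l,r}`,
so by the triangle inequality every Laplace factor shrinks by at most `exp(−|w_{l,j} − w_{l,r}|/b)`
and the whole density by at most `exp(−Δ_{j,r})`. Summing over the databases with `x i = r` gives
`f_{Y|D_i=r} · exp(−Δ_{j,r}) ≤ f_{Y|D_i=j}`, and averaging over `j` with weights `p_{i,j}`
gives the claim.
-/

open Finset Real

noncomputable section

theorem Finset.sum_filter_apply_eq_sum_filter_update {ι β M : Type*} [Fintype ι] [DecidableEq ι]
    [Fintype β] [DecidableEq β] [AddCommMonoid M] (f : (ι → β) → M) (i : ι) (r j : β) :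
    ∑ x ∈ univ.filter (fun x : ι → β => x i = j), f x
      = ∑ x ∈ univ.filter (fun x : ι → β => x i = r), f (Function.update x i j) := by
  refine sum_nbij' (Function.update · i r) (Function.update · i j) ?_ ?_ ?_ ?_ ?_
  · simp
  · simp
  all_goals
    intro x hx
    simp [← (mem_filter.1 hx).2]

theorem Real.exp_neg_abs_div_mul_exp_neg_abs_div_le {b : ℝ} (hb : 0 < b) (u d : ℝ) :
    exp (-|u| / b) * exp (-|d| / b) ≤ exp (-|u - d| / b) := by
  rw [← exp_add, exp_le_exp, ← add_div, div_le_div_iff_of_pos_right hb]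
  linarith [abs_sub u d]

theorem linQuery_update {n m k : ℕ} (W : Fin m → Fin k → ℝ) (x : Fin n → Fin k)
    (i : Fin n) (j : Fin k) (l : Fin m) :
    linQuery W (Function.update x i j) l = linQuery W x l + (W l j - W l (x i)) := by
  simp only [linQuery, Function.update_apply, apply_ite (W l)]
  rw [← sum_erase_add _ _ (mem_univ i), ← sum_erase_add _ _ (mem_univ i), if_pos rfl]
  rw [sum_congr rfl fun i' hi' => if_neg (ne_of_mem_erase hi')]
  ring

theorem exp_neg_Δcol {m k : ℕ} (W : Fin m → Fin k → ℝ) (b : ℝ) (j r : Fin k) :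
    exp (-Δcol W b j r) = ∏ l, exp (-|W l j - W l r| / b) := by
  rw [← exp_sum, Δcol, ← sum_div, sum_neg_distrib, neg_div]

theorem lapDensity_mul_exp_neg_Δcol_le_update {n m k : ℕ} (W : Fin m → Fin k → ℝ) {b : ℝ}
    (hb : 0 < b) {x : Fin n → Fin k} {i : Fin n} {r : Fin k} (hx : x i = r) (j : Fin k)
    (y : Fin m → ℝ) :
    lapDensity W b x y * exp (-Δcol W b j r) ≤ lapDensity W b (Function.update x i j) y := by
  rw [lapDensity, lapDensity, exp_neg_Δcol, ← prod_mul_distrib]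
  refine prod_le_prod (fun l _ => by positivity) fun l _ => ?_
  rw [mul_assoc, linQuery_update, hx, ← sub_sub]
  gcongr
  exact exp_neg_abs_div_mul_exp_neg_abs_div_le hb _ _

theorem fCond_mul_exp_neg_Δcol_le {n m k : ℕ} (W : Fin m → Fin k → ℝ) {b : ℝ} (hb : 0 < b)
    {p : Fin n → Fin k → ℝ} (hp : ∀ i j, 0 ≤ p i j) (i : Fin n) (r j : Fin k) (y : Fin m → ℝ) :
    fCond W b p i r y * exp (-Δcol W b j r) ≤ fCond W b p i j y := by
  rw [fCond, fCond, sum_filter_apply_eq_sum_filter_update _ i r j, sum_mul]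
  refine sum_le_sum fun x hx => ?_
  have hprior : ∏ i' ∈ univ.erase i, p i' (Function.update x i j i')
      = ∏ i' ∈ univ.erase i, p i' (x i') :=
    prod_congr rfl fun i' hi' => by rw [Function.update_of_ne (ne_of_mem_erase hi')]
  rw [hprior, mul_assoc]
  exact mul_le_mul_of_nonneg_left
    (lapDensity_mul_exp_neg_Δcol_le_update W hb (mem_filter.1 hx).2 j y)
    (prod_nonneg fun i' _ => hp i' _)

theorem fY_eq_sum_mul_fCond {n m k : ℕ} (W : Fin m → Fin k → ℝ) (b : ℝ)
    (p : Fin n → Fin k → ℝ) (i : Fin n) (y : Fin m → ℝ) :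
    fY W b p y = ∑ j, p i j * fCond W b p i j y := by
  rw [fY, ← sum_fiberwise univ (fun x : Fin n → Fin k => x i)]
  refine sum_congr rfl fun j _ => ?_
  rw [fCond, mul_sum]
  refine sum_congr rfl fun x hx => ?_
  rw [← mul_assoc, ← (mem_filter.1 hx).2, mul_prod_erase univ (fun i' => p i' (x i')) (mem_univ i)]

theorem laplace_density_ratio_prior_bound_general
    (k n m : ℕ)
    (b : ℝ) (hb : 0 < b) (W : Fin m → Fin k → ℝ)
    (α : ℝ) (hα : 0 < α)
    (p : Fin n → Fin k → ℝ)
    (hplb : ∀ i j, α ≤ p i j)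
    (i : Fin n) (r : Fin k) (y : Fin m → ℝ) :
    fCond W b p i r y * (∑ j, p i j * Real.exp (-Δcol W b j r)) ≤ fY W b p y := by
  have hp : ∀ i j, 0 ≤ p i j := fun i j => hα.le.trans (hplb i j)
  calc fCond W b p i r y * ∑ j, p i j * exp (-Δcol W b j r)
      = ∑ j, p i j * (fCond W b p i r y * exp (-Δcol W b j r)) := by
        rw [mul_sum]; exact sum_congr rfl fun j _ => by ring
    _ ≤ ∑ j, p i j * fCond W b p i j y :=
        sum_le_sum fun j _ =>
          mul_le_mul_of_nonneg_left (fCond_mul_exp_neg_Δcol_le W hb hp i r j y) (hp i j)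
    _ = fY W b p y := (fY_eq_sum_mul_fCond W b p i y).symm

/-- Triangle-inequality step of the corollary proof: for every product prior with
classwise lower bound `α`, record `i`, class `r` and output `y`,
`f_{Y|D_i=r}(y) · (∑_j p_{i,j} exp(−Δ_{j,r})) ≤ f_Y(y)`. -/
theorem laplace_density_ratio_prior_bound
    (k n m : ℕ) (hk : 0 < k) (hn : 0 < n) (hm : 0 < m)
    (b : ℝ) (hb : 0 < b) (W : Fin m → Fin k → ℝ)
    (α : ℝ) (hα : 0 < α) (hαk : α ≤ 1 / (k : ℝ))
    (p : Fin n → Fin k → ℝ)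
    (hplb : ∀ i j, α ≤ p i j) (hpsum : ∀ i, ∑ j, p i j = 1)
    (i : Fin n) (r : Fin k) (y : Fin m → ℝ) :
    fCond W b p i r y * (∑ j, p i j * Real.exp (-Δcol W b j r)) ≤ fY W b p y :=
  laplace_density_ratio_prior_bound_general k n m b hb W α hα p hplb i r y

end
end

section
/- The maximum over all subsets I ⊆ Fin m of the spread of the I-signed column sums equals the maximal ℓ1 column distance: max_{I ⊆ Fin m} ((max_j c_j^I) − (min_j c_j^I)) = max_{j1, j2 ∈ Fin k} ∑_l |w_{l,j1} − w_{l,j2}|. -/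
open Finset Real

noncomputable section

/-- Signed column sum `c_j^I := ∑_{l ∈ I} w_{l,j} − ∑_{l ∉ I} w_{l,j}`. -/
def signedColSum {m k : ℕ} (W : Fin m → Fin k → ℝ) (I : Finset (Fin m)) (j : Fin k) : ℝ :=
  (∑ l ∈ I, W l j) - ∑ l ∈ Iᶜ, W l j

lemma signedColSum_sub {m k : ℕ} (W : Fin m → Fin k → ℝ) (I : Finset (Fin m)) (j1 j2 : Fin k) :
    signedColSum W I j1 - signedColSum W I j2
      = (∑ l ∈ I, (W l j1 - W l j2)) - ∑ l ∈ Iᶜ, (W l j1 - W l j2) := by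
  simp [signedColSum, Finset.sum_sub_distrib]
  ring

/-- The maximal spread of the `I`-signed column sums over all subsets `I ⊆ [m]`
equals the maximal ℓ1 distance between columns of the workload. -/
theorem max_signedColSum_spread_eq_max_l1
    (k m : ℕ) (hk : 0 < k) (hm : 0 < m)
    (W : Fin m → Fin k → ℝ) :
    (⨆ I : Finset (Fin m), ((⨆ j, signedColSum W I j) - ⨅ j, signedColSum W I j))
      = ⨆ j1 : Fin k, ⨆ j2 : Fin k, ∑ l, |W l j1 - W l j2| := by
  have hkne : Nonempty (Fin k) := ⟨⟨0, hk⟩⟩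
  apply le_antisymm
  · apply ciSup_le
    intro I
    obtain ⟨j1, hj1⟩ := Finite.exists_max (signedColSum W I)
    obtain ⟨j2, hj2⟩ := Finite.exists_min (signedColSum W I)
    have hsup : (⨆ j, signedColSum W I j) = signedColSum W I j1 :=
      le_antisymm (ciSup_le hj1) (le_ciSup (Finite.bddAbove_range _) j1)
    have hinf : (⨅ j, signedColSum W I j) = signedColSum W I j2 :=
      le_antisymm (ciInf_le (Finite.bddBelow_range _) j2) (le_ciInf hj2)
    rw [hsup, hinf, signedColSum_sub]
    have h1 : (∑ l ∈ I, (W l j1 - W l j2)) - ∑ l ∈ Iᶜ, (W l j1 - W l j2)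
        ≤ ∑ l, |W l j1 - W l j2| := by
      rw [← Finset.sum_add_sum_compl I (fun l => |W l j1 - W l j2|), sub_eq_add_neg,
        ← Finset.sum_neg_distrib]
      exact add_le_add (Finset.sum_le_sum fun l _ => le_abs_self _)
        (Finset.sum_le_sum fun l _ => neg_le_abs _)
    refine h1.trans ?_
    exact le_trans
      (le_ciSup (f := fun j2 => ∑ l, |W l j1 - W l j2|) (Finite.bddAbove_range _) j2)
      (le_ciSup (f := fun j1 => ⨆ j2, ∑ l, |W l j1 - W l j2|) (Finite.bddAbove_range _) j1)
  · apply ciSup_le; intro j1; apply ciSup_le; intro j2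
    set I : Finset (Fin m) := Finset.univ.filter (fun l => W l j2 ≤ W l j1) with hI
    have key : ∑ l, |W l j1 - W l j2| = signedColSum W I j1 - signedColSum W I j2 := by
      rw [signedColSum_sub, ← Finset.sum_add_sum_compl I (fun l => |W l j1 - W l j2|),
        sub_eq_add_neg, ← Finset.sum_neg_distrib]
      congr 1
      · apply Finset.sum_congr rfl
        intro l hl
        rw [hI, Finset.mem_filter] at hl
        exact abs_of_nonneg (by linarith [hl.2])
      · apply Finset.sum_congr rfl
        intro l hl
        rw [Finset.mem_compl, hI, Finset.mem_filter] at hl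
        push_neg at hl
        have := hl (Finset.mem_univ l)
        rw [abs_of_neg (by linarith)]
    rw [key]
    have h1 : signedColSum W I j1 ≤ ⨆ j, signedColSum W I j :=
      le_ciSup (Finite.bddAbove_range _) j1
    have h2 : (⨅ j, signedColSum W I j) ≤ signedColSum W I j2 :=
      ciInf_le (Finite.bddBelow_range _) j2
    have h3 : signedColSum W I j1 - signedColSum W I j2
        ≤ (⨆ j, signedColSum W I j) - ⨅ j, signedColSum W I j := by linarith
    exact h3.trans (le_ciSup
      (f := fun I : Finset (Fin m) => (⨆ j, signedColSum W I j) - ⨅ j, signedColSum W I j)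
      (Finite.bddAbove_range _) I)

end
end

section
/- Assume the workload is nondegenerate in the sense that max_{j1, j2 ∈ Fin k} ∑_l |w_{l,j1} − w_{l,j2}| > 0, and let ε_DP := (max_{j1,j2} ∑_l |w_{l,j1} − w_{l,j2}|)/b. Then for every α ∈ (0, 1/k], the exponentiated PML bound satisfies B_thm(α) := max_{I ⊆ Fin m} exp(−(min_j c_j^I)/b) / (α ∑_j exp(−c_j^I/b) + (1 − kα) exp(−(max_j c_j^I)/b)) < exp(ε_DP); i.e., the context-aware leakage bound is strictly smaller than the standard differential-privacy parameter of the Laplace mechanism. -/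
open Finset Real

noncomputable section

/-- The exponentiated PML bound `B_thm(α)`. -/
def Bthm {m k : ℕ} (W : Fin m → Fin k → ℝ) (b α : ℝ) : ℝ :=
  ⨆ I : Finset (Fin m),
    Real.exp (-(⨅ j, signedColSum W I j) / b) /
      (α * (∑ j, Real.exp (-(signedColSum W I j) / b)) +
        (1 - (k : ℝ) * α) * Real.exp (-(⨆ j, signedColSum W I j) / b))

/-- The DP parameter of the Laplace mechanism with scale `b` on workload `W`. -/
def εDP {m k : ℕ} (W : Fin m → Fin k → ℝ) (b : ℝ) : ℝ :=
  (⨆ j1 : Fin k, ⨆ j2 : Fin k, ∑ l, |W l j1 - W l j2|) / b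

/-! Put `S := max_{j1,j2} ∑_l |w_{l,j1} − w_{l,j2}|` and `D := exp(−S/b) < 1`. For every `I` the
spread `max_j c_j^I − min_j c_j^I` is at most `S`, so each exponential `exp(−c_j^I/b)` in the
denominator is at least `D N`, where `N := exp(−(min_j c_j^I)/b)` is the numerator and is itself one
of the `k` summands. The denominator is therefore at least
`α (N + (k − 1) D N) + (1 − kα) D N = (α + (1 − α) D) N`, whence
`B_thm(α) ≤ 1 / (α + (1 − α) D) < 1 / D = exp(ε_DP)`. -/

lemma sum_sub_sum_compl_le_sum_abs {ι : Type*} [Fintype ι] [DecidableEq ι]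
    (s : Finset ι) (f : ι → ℝ) : (∑ i ∈ s, f i) - ∑ i ∈ sᶜ, f i ≤ ∑ i, |f i| := by
  rw [← sum_add_sum_compl s fun i => |f i|]
  have hs : ∑ i ∈ s, f i ≤ ∑ i ∈ s, |f i| := sum_le_sum fun i _ => le_abs_self (f i)
  have hsc : -∑ i ∈ sᶜ, f i ≤ ∑ i ∈ sᶜ, |f i| :=
    (neg_le_abs _).trans (abs_sum_le_sum_abs _ _)
  linarith

lemma signedColSum_sub_le {m k : ℕ} (W : Fin m → Fin k → ℝ) (I : Finset (Fin m))
    (j₁ j₂ : Fin k) :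
    signedColSum W I j₁ - signedColSum W I j₂ ≤ ∑ l, |W l j₁ - W l j₂| := by
  have h := sum_sub_sum_compl_le_sum_abs I fun l => W l j₁ - W l j₂
  simp only [sum_sub_distrib] at h
  unfold signedColSum
  linarith

lemma ciSup_sub_ciInf_le_ciSup_ciSup {ι : Type*} [Finite ι] [Nonempty ι] (c : ι → ℝ)
    (d : ι → ι → ℝ) (h : ∀ i j, c i - c j ≤ d i j) :
    (⨆ i, c i) - (⨅ i, c i) ≤ ⨆ i, ⨆ j, d i j := by
  obtain ⟨i, hi⟩ := exists_eq_ciSup_of_finite (f := c)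
  obtain ⟨j, hj⟩ := exists_eq_ciInf_of_finite (f := c)
  rw [← hi, ← hj]
  exact (h i j).trans <| (le_ciSup (Finite.bddAbove_range _) j).trans
    (le_ciSup (Finite.bddAbove_range (fun i => ⨆ j, d i j)) i)

lemma add_card_sub_one_mul_le_sum {ι : Type*} [Fintype ι] (f : ι → ℝ) (i : ι) {L : ℝ}
    (hL : ∀ j, L ≤ f j) : f i + ((Fintype.card ι : ℝ) - 1) * L ≤ ∑ j, f j := by
  classical
  have hcard : ((univ.erase i).card : ℝ) = (Fintype.card ι : ℝ) - 1 := by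
    rw [card_erase_of_mem (mem_univ i), card_univ,
      Nat.cast_sub (Fintype.card_pos_iff.2 ⟨i⟩), Nat.cast_one]
  rw [← add_sum_erase _ _ (mem_univ i), ← hcard, ← nsmul_eq_mul]
  gcongr
  exact card_nsmul_le_sum _ _ _ fun j _ => hL j

lemma div_le_inv_of_le_sum {k α D N L T : ℝ} (hN : 0 < N) (hα : 0 < α) (hα₁ : α ≤ 1)
    (hD : 0 ≤ D) (hL : D * N ≤ L) (hT : N + (k - 1) * L ≤ T) :
    N / (α * T + (1 - k * α) * L) ≤ (α + (1 - α) * D)⁻¹ := by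
  have hpos : 0 < α + (1 - α) * D := by nlinarith
  have hden : (α + (1 - α) * D) * N ≤ α * T + (1 - k * α) * L := by
    nlinarith [mul_le_mul_of_nonneg_left hT hα.le, mul_le_mul_of_nonneg_left hL (sub_nonneg.2 hα₁)]
  calc N / (α * T + (1 - k * α) * L) ≤ N / ((α + (1 - α) * D) * N) :=
        div_le_div_of_nonneg_left hN.le (by positivity) hden
    _ = (α + (1 - α) * D)⁻¹ := by field_simp

lemma exp_neg_ciInf_div_le {ι : Type*} [Fintype ι] [Nonempty ι] (c : ι → ℝ) {b S α : ℝ}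
    (hb : 0 < b) (hS : (⨆ i, c i) - (⨅ i, c i) ≤ S) (hα : 0 < α)
    (hα₁ : α ≤ 1) :
    exp (-(⨅ i, c i) / b) /
        (α * ∑ i, exp (-c i / b) + (1 - (Fintype.card ι : ℝ) * α) * exp (-(⨆ i, c i) / b)) ≤
      (α + (1 - α) * exp (-S / b))⁻¹ := by
  obtain ⟨i₀, hi₀⟩ := exists_eq_ciInf_of_finite (f := c)
  have hL : exp (-S / b) * exp (-(⨅ i, c i) / b) ≤ exp (-(⨆ i, c i) / b) := by
    rw [← exp_add, ← add_div]
    gcongr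
    linarith
  have hmax : ∀ i, exp (-(⨆ i, c i) / b) ≤ exp (-c i / b) := fun i => by
    gcongr
    exact le_ciSup (Finite.bddAbove_range c) i
  have hT := add_card_sub_one_mul_le_sum (fun i => exp (-c i / b)) i₀ hmax
  rw [hi₀] at hT
  exact div_le_inv_of_le_sum (exp_pos _) hα hα₁ (exp_pos _).le hL hT

theorem Bthm_lt_exp_epsDP_general
    (k m : ℕ) (hk : 0 < k)
    (b : ℝ) (hb : 0 < b) (W : Fin m → Fin k → ℝ)
    (hW : 0 < ⨆ j1 : Fin k, ⨆ j2 : Fin k, ∑ l, |W l j1 - W l j2|)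
    (α : ℝ) (hα : 0 < α) (hαk : α ≤ 1 / (k : ℝ)) :
    Bthm W b α < Real.exp (εDP W b) := by
  have : NeZero k := ⟨hk.ne'⟩
  set S := ⨆ j1 : Fin k, ⨆ j2 : Fin k, ∑ l, |W l j1 - W l j2|
  have hα₁ : α ≤ 1 := hαk.trans (div_le_one_of_le₀ (Nat.one_le_cast.2 hk) (Nat.cast_nonneg k))
  have hD : exp (-S / b) < 1 := exp_lt_one_iff.2 (div_neg_of_neg_of_pos (neg_neg_of_pos hW) hb)
  calc Bthm W b α ≤ (α + (1 - α) * exp (-S / b))⁻¹ := ciSup_le fun I => by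
        have h := exp_neg_ciInf_div_le (signedColSum W I) hb
          (ciSup_sub_ciInf_le_ciSup_ciSup _ _ (signedColSum_sub_le W I)) hα hα₁
        rwa [Fintype.card_fin] at h
    _ < (exp (-S / b))⁻¹ := inv_strictAnti₀ (exp_pos _) (by nlinarith [exp_pos (-S / b)])
    _ = exp (εDP W b) := by rw [εDP, ← exp_neg, neg_div, neg_neg]

/-- For a nondegenerate workload, the context-aware bound is strictly smaller than the
standard DP guarantee: `B_thm(α) < exp(ε_DP)` for all `α ∈ (0, 1/k]`. -/
theorem Bthm_lt_exp_epsDP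
    (k m : ℕ) (hk : 0 < k) (hm : 0 < m)
    (b : ℝ) (hb : 0 < b) (W : Fin m → Fin k → ℝ)
    (hW : 0 < ⨆ j1 : Fin k, ⨆ j2 : Fin k, ∑ l, |W l j1 - W l j2|)
    (α : ℝ) (hα : 0 < α) (hαk : α ≤ 1 / (k : ℝ)) :
    Bthm W b α < Real.exp (εDP W b) :=
  Bthm_lt_exp_epsDP_general k m hk b hb W hW α hα hαk
end
end
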